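/- arXiv:1909.06949 — 7 statements merged into one kernel-verified Lean document; each statement's English description precedes it below -/
import Mathlib

section
/- Let Q be a strongly convex rational polyhedral cone in a lattice M, R = k[Q ∩ M] its semigroup algebra with irrelevant maximal ideal m_Q, W the maximum weight function of Q, and Γ_Q the associated constant. Then for each nonnegative integer k, every monomial χ^u with W(u) > k − 1 + Γ_Q belongs to m_Q^k. Consequently R/m_Q^k is spanned over k by the images of the monomials χ^u with W(u) ≤ k − 1 + Γ_Q. -/
open Finset

noncomputable section

/-- Cast an integer vector to a real vector. -/
def castZ {n : ℕ} (u : Fin n → ℤ) : Fin n → ℝ := fun j => (u j : ℝ)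

/-- Membership in the cone spanned by the vectors `w`. -/
def inCone {n m : ℕ} (w : Fin m → (Fin n → ℝ)) (x : Fin n → ℝ) : Prop :=
  ∃ a : Fin m → ℝ, (∀ i, 0 ≤ a i) ∧ x = ∑ i, a i • w i

/-- The set of total weights of nonnegative representations of `x` in terms of `w`. -/
def weightSet {n m : ℕ} (w : Fin m → (Fin n → ℝ)) (x : Fin n → ℝ) : Set ℝ :=
  { t | ∃ a : Fin m → ℝ, (∀ i, 0 ≤ a i) ∧ x = ∑ i, a i • w i ∧ t = ∑ i, a i }

/-- The maximum weight function `W`. -/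
def maxWeight {n m : ℕ} (w : Fin m → (Fin n → ℝ)) (x : Fin n → ℝ) : ℝ :=
  sSup (weightSet w x)

/-- A lattice vector is primitive. -/
def Primitive {n : ℕ} (v : Fin n → ℤ) : Prop :=
  v ≠ 0 ∧ ∀ (z : ℤ) (q : Fin n → ℤ), 0 < z → v = z • q → z = 1

/-- Lattice points of the cone. -/
def latticeInCone {n m : ℕ} (w : Fin m → (Fin n → ℤ)) (u : Fin n → ℤ) : Prop :=
  inCone (fun i => castZ (w i)) (castZ u)

/-- `χ^u ∈ m_Q^k` : `u` is a sum of `k` nonzero lattice points of the cone plus a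
lattice point of the cone. -/
def inPowM {n m : ℕ} (w : Fin m → (Fin n → ℤ)) (u : Fin n → ℤ) (k : ℕ) : Prop :=
  ∃ v : Fin k → (Fin n → ℤ), (∀ i, latticeInCone w (v i) ∧ v i ≠ 0) ∧
    latticeInCone w (u - ∑ i, v i)

/-- `k_u` : the largest `k` such that `χ^u ∈ m_Q^k`. -/
def kU {n m : ℕ} (w : Fin m → (Fin n → ℤ)) (u : Fin n → ℤ) : ℕ :=
  sSup {k | inPowM w u k}

/-- Lattice points of the fundamental box `S_Q`. -/
def inBox {n m : ℕ} (w : Fin m → (Fin n → ℤ)) (u : Fin n → ℤ) : Prop :=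
  ∃ a : Fin m → ℝ, (∀ i, 0 ≤ a i ∧ a i < 1) ∧ castZ u = ∑ i, a i • castZ (w i)

/-- The constant `Γ_Q`. -/
def gammaQ {n m : ℕ} (w : Fin m → (Fin n → ℤ)) : ℝ :=
  sSup { x | ∃ u, inBox w u ∧
    x = maxWeight (fun i => castZ (w i)) (castZ u) - (kU w u : ℝ) }

end

section Aux

variable {n m : ℕ}

lemma castZ_add' (u v : Fin n → ℤ) : castZ (u + v) = castZ u + castZ v := by
  funext j; simp [castZ]

lemma castZ_sub' (u v : Fin n → ℤ) : castZ (u - v) = castZ u - castZ v := by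
  funext j; simp [castZ]

lemma castZ_sum' {ι : Type*} (s : Finset ι) (f : ι → Fin n → ℤ) :
    castZ (∑ i ∈ s, f i) = ∑ i ∈ s, castZ (f i) := by
  funext j; simp [castZ, Finset.sum_apply]

lemma castZ_nsmul' (N : ℕ) (v : Fin n → ℤ) : castZ (N • v) = (N : ℝ) • castZ v := by
  funext j; simp [castZ]

lemma cone_add' (w : Fin m → (Fin n → ℤ)) {x y : Fin n → ℤ}
    (hx : latticeInCone w x) (hy : latticeInCone w y) : latticeInCone w (x + y) := by
  obtain ⟨a, ha, hxa⟩ := hx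
  obtain ⟨b, hb, hyb⟩ := hy
  refine ⟨a + b, fun i => add_nonneg (ha i) (hb i), ?_⟩
  rw [castZ_add', hxa, hyb, ← Finset.sum_add_distrib]
  exact Finset.sum_congr rfl fun i _ => by simp [add_smul]

lemma cone_wi' (w : Fin m → (Fin n → ℤ)) (i : Fin m) : latticeInCone w (w i) := by
  refine ⟨fun j => if j = i then (1:ℝ) else 0, fun j => ?_, ?_⟩
  · dsimp only; split <;> norm_num
  · symm
    rw [Finset.sum_eq_single i]
    · simp
    · intro b _ hb; simp [hb]
    · intro h; exact absurd (Finset.mem_univ i) h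

lemma pow_zero' (w : Fin m → (Fin n → ℤ)) {u : Fin n → ℤ} (hu : latticeInCone w u) :
    inPowM w u 0 :=
  ⟨fun _ => 0, fun i => i.elim0, by simpa using hu⟩

lemma pow_succ_down' (w : Fin m → (Fin n → ℤ)) {u : Fin n → ℤ} {k : ℕ}
    (h : inPowM w u (k + 1)) : inPowM w u k := by
  obtain ⟨v, hv, hrem⟩ := h
  refine ⟨fun i => v i.castSucc, fun i => hv _, ?_⟩
  have heq : u - ∑ i, v (Fin.castSucc i) = (u - ∑ i, v i) + v (Fin.last k) := by
    rw [Fin.sum_univ_castSucc]; ring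
  rw [heq]
  exact cone_add' w hrem (hv _).1

lemma pow_mono' (w : Fin m → (Fin n → ℤ)) {u : Fin n → ℤ} {k k' : ℕ} (hkk : k ≤ k')
    (h : inPowM w u k') : inPowM w u k := by
  induction k' with
  | zero => rwa [Nat.le_zero.mp hkk]
  | succ k'' ih =>
    rcases Nat.lt_or_ge k (k'' + 1) with hlt | hge
    · exact ih (Nat.lt_succ_iff.mp hlt) (pow_succ_down' w h)
    · rwa [le_antisymm hkk hge]

lemma pow_add_piece' (w : Fin m → (Fin n → ℤ)) {u z : Fin n → ℤ} {k : ℕ}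
    (h : inPowM w u k) (hz : latticeInCone w z) (hz0 : z ≠ 0) :
    inPowM w (u + z) (k + 1) := by
  obtain ⟨v, hv, hrem⟩ := h
  refine ⟨Fin.cons z v, fun i => ?_, ?_⟩
  · refine Fin.cases ?_ ?_ i
    · exact ⟨hz, hz0⟩
    · intro j; simpa using hv j
  · have h1 : ∑ i, Fin.cons z v i = z + ∑ i, v i := by
      simp [Fin.sum_univ_succ]
    have h2 : u + z - (z + ∑ i, v i) = u - ∑ i, v i := by ring
    rw [h1, h2]; exact hrem

lemma pow_add_nsmul' (w : Fin m → (Fin n → ℤ)) {u : Fin n → ℤ} {k : ℕ} (i : Fin m)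
    (hwi0 : w i ≠ 0) (N : ℕ) (h : inPowM w u k) : inPowM w (u + N • w i) (k + N) := by
  induction N with
  | zero => simpa using h
  | succ N ih =>
    have h1 := pow_add_piece' w ih (cone_wi' w i) hwi0
    have h2 : u + N • w i + w i = u + (N + 1) • w i := by rw [succ_nsmul]; ring
    have h3 : k + N + 1 = k + (N + 1) := by ring
    rwa [h2, h3] at h1

lemma pow_fold' (w : Fin m → (Fin n → ℤ)) {u : Fin n → ℤ} {k : ℕ} (N : Fin m → ℕ)
    (hw0 : ∀ i, w i ≠ 0) (h : inPowM w u k) (s : Finset (Fin m)) :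
    inPowM w (u + ∑ i ∈ s, N i • w i) (k + ∑ i ∈ s, N i) := by
  induction s using Finset.induction with
  | empty => simpa using h
  | @insert a s ha ih =>
    rw [Finset.sum_insert ha, Finset.sum_insert ha]
    have h1 := pow_add_nsmul' w a (hw0 a) (N a) ih
    have h2 : u + ∑ i ∈ s, N i • w i + N a • w a = u + (N a • w a + ∑ i ∈ s, N i • w i) := by
      ring
    have h3 : k + ∑ i ∈ s, N i + N a = k + (N a + ∑ i ∈ s, N i) := by ring
    rwa [h2, h3] at h1

lemma box_finite' (w : Fin m → (Fin n → ℤ)) : {u : Fin n → ℤ | inBox w u}.Finite := by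
  have hsub : {u : Fin n → ℤ | inBox w u} ⊆
      Set.pi Set.univ (fun j => Set.Icc (-(∑ i, |w i j|)) (∑ i, |w i j|)) := by
    intro u hu j _
    obtain ⟨a, ha, hrep⟩ := hu
    have h1 : (u j : ℝ) = ∑ i, a i * (w i j : ℝ) := by
      have := congrFun hrep j
      simpa [castZ, Finset.sum_apply] using this
    have h2 : |(u j : ℝ)| ≤ ∑ i, |(w i j : ℝ)| := by
      rw [h1]
      refine (Finset.abs_sum_le_sum_abs _ _).trans (Finset.sum_le_sum fun i _ => ?_)
      rw [abs_mul]
      calc |a i| * |(w i j : ℝ)| ≤ 1 * |(w i j : ℝ)| := by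
            apply mul_le_mul_of_nonneg_right _ (abs_nonneg _)
            rw [abs_of_nonneg (ha i).1]; exact le_of_lt (ha i).2
        _ = |(w i j : ℝ)| := one_mul _
    have h3 : |u j| ≤ ∑ i, |w i j| := by exact_mod_cast (by push_cast; exact h2 : (|u j| : ℝ) ≤ ((∑ i, |w i j| : ℤ) : ℝ))
    exact abs_le.mp h3
  exact (Set.Finite.pi fun j => Set.finite_Icc _ _).subset hsub

lemma gamma_bddAbove' (w : Fin m → (Fin n → ℤ)) :
    BddAbove { x | ∃ u, inBox w u ∧
      x = maxWeight (fun i => castZ (w i)) (castZ u) - (kU w u : ℝ) } := by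
  have heq : { x | ∃ u, inBox w u ∧
      x = maxWeight (fun i => castZ (w i)) (castZ u) - (kU w u : ℝ) } =
      (fun u => maxWeight (fun i => castZ (w i)) (castZ u) - (kU w u : ℝ)) ''
        {u | inBox w u} := by
    ext x
    simp only [Set.mem_setOf_eq, Set.mem_image]
    constructor
    · rintro ⟨u, hu, rfl⟩; exact ⟨u, hu, rfl⟩
    · rintro ⟨u, hu, rfl⟩; exact ⟨u, hu, rfl⟩
  rw [heq]
  exact ((box_finite' w).image _).bddAbove

end Aux

/-- Every monomial `χ^u` with `W(u) > k − 1 + Γ_Q` lies in `m_Q^k`.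
Consequently `R/m_Q^k` is spanned by the images of the monomials `χ^u` with
`W(u) ≤ k − 1 + Γ_Q`: every monomial either has weight at most `k − 1 + Γ_Q`,
or it dies in the quotient. -/

theorem monomial_mem_pow_irrelevant {n m : ℕ} (w : Fin m → (Fin n → ℤ))
    (hprim : ∀ i, Primitive (w i))
    (hstrconv : ∀ x : Fin n → ℝ, inCone (fun i => castZ (w i)) x →
      inCone (fun i => castZ (w i)) (-x) → x = 0)
    (hmax : ∀ x, inCone (fun i => castZ (w i)) x →
      IsGreatest (weightSet (fun i => castZ (w i)) x) (maxWeight (fun i => castZ (w i)) x)) :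
    (∀ (k : ℕ) (u : Fin n → ℤ), latticeInCone w u →
      maxWeight (fun i => castZ (w i)) (castZ u) > (k : ℝ) - 1 + gammaQ w →
      inPowM w u k) ∧
    (∀ (k : ℕ) (u : Fin n → ℤ), latticeInCone w u →
      maxWeight (fun i => castZ (w i)) (castZ u) ≤ (k : ℝ) - 1 + gammaQ w ∨
      inPowM w u k) := by
  have main : ∀ (k : ℕ) (u : Fin n → ℤ), latticeInCone w u →
      maxWeight (fun i => castZ (w i)) (castZ u) > (k : ℝ) - 1 + gammaQ w →
      inPowM w u k := by
    intro k u hu hWu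
    obtain ⟨a, ha0, hrep, hsum⟩ := (hmax (castZ u) hu).1
    set N : Fin m → ℕ := fun i => ⌊a i⌋₊ with hNdef
    set u' : Fin n → ℤ := u - ∑ i, N i • w i with hu'def
    have hcast : castZ u' = ∑ i, (a i - (N i : ℝ)) • castZ (w i) := by
      rw [hu'def, castZ_sub', castZ_sum', hrep, ← Finset.sum_sub_distrib]
      exact Finset.sum_congr rfl fun i _ => by rw [castZ_nsmul', sub_smul]
    have ha' : ∀ i, 0 ≤ a i - (N i : ℝ) ∧ a i - (N i : ℝ) < 1 := by
      intro i
      constructor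
      · have := Nat.floor_le (ha0 i); simp only [hNdef]; linarith
      · have := Nat.lt_floor_add_one (a i); simp only [hNdef]; linarith
    have hbox : inBox w u' := ⟨fun i => a i - (N i : ℝ), ha', hcast⟩
    have hu'cone : latticeInCone w u' := ⟨fun i => a i - (N i : ℝ), fun i => (ha' i).1, hcast⟩
    have hW' := hmax (castZ u') hu'cone
    have hW'ge : maxWeight (fun i => castZ (w i)) (castZ u) - (∑ i, N i : ℕ) ≤
        maxWeight (fun i => castZ (w i)) (castZ u') := by
      refine hW'.2 ⟨fun i => a i - (N i : ℝ), fun i => (ha' i).1, hcast, ?_⟩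
      rw [hsum, Finset.sum_sub_distrib]
      push_cast
      ring
    have hGam : maxWeight (fun i => castZ (w i)) (castZ u') - (kU w u' : ℝ) ≤ gammaQ w :=
      le_csSup (gamma_bddAbove' w) ⟨u', hbox, rfl⟩
    have h0 : inPowM w u' 0 := pow_zero' w hu'cone
    obtain ⟨c, hc, hkc⟩ : ∃ c, inPowM w u' c ∧ k ≤ c + ∑ i, N i := by
      by_cases hbdd : BddAbove {k | inPowM w u' k}
      · have hmem : inPowM w u' (kU w u') :=
          Nat.sSup_mem (s := {k | inPowM w u' k}) ⟨0, h0⟩ hbdd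
        refine ⟨kU w u', hmem, ?_⟩
        have hcast2 : (k : ℝ) < (kU w u' : ℝ) + (∑ i, N i : ℕ) + 1 := by linarith
        have : k < kU w u' + ∑ i, N i + 1 := by exact_mod_cast hcast2
        omega
      · obtain ⟨k', hk', hkk'⟩ := not_bddAbove_iff.mp hbdd k
        exact ⟨k, pow_mono' w hkk'.le hk', Nat.le_add_right _ _⟩
    have hufold := pow_fold' w N (fun i => (hprim i).1) hc Finset.univ
    have hurec : u' + ∑ i, N i • w i = u := by rw [hu'def]; ring
    rw [hurec] at hufold
    exact pow_mono' w hkc hufold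
  refine ⟨main, fun k u hu => ?_⟩
  rcases le_or_gt (maxWeight (fun i => castZ (w i)) (castZ u)) ((k : ℝ) - 1 + gammaQ w) with h | h
  · exact Or.inl h
  · exact Or.inr (main k u hu h)
end

section
/- Let v_1,...,v_n ∈ ℤ^n be primitive linearly independent vectors, and let w_1,...,w_n ∈ ℤ^n be the primitive generators of the rays of the dual cone Cone(v_1,...,v_n)^∨, labeled so that ⟨w_i, v_j⟩ = 0 for i ≠ j. Then for each i, ⟨v_i, w_i⟩ = mult(v_1,...,v_n) / mult(v_1,...,v̂_i,...,v_n), where mult denotes the index of the subgroup generated by the given vectors inside the lattice obtained by intersecting ℤ^n with their real span. -/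
open Finset

noncomputable section

/-- The cast `(Fin n → ℤ) →+ (Fin n → ℝ)` as an additive monoid hom. -/
def castHom (n : ℕ) : (Fin n → ℤ) →+ (Fin n → ℝ) :=
  AddMonoidHom.mk' castZ (by
    intro a b; funext j; simp [castZ])

/-- The subgroup of lattice points lying in the real span of the family `v`. -/
def latticeOfSpan {n : ℕ} {ι : Type*} (v : ι → (Fin n → ℤ)) : AddSubgroup (Fin n → ℤ) :=
  (AddSubgroup.comap (castHom n)
    (Submodule.span ℝ (Set.range fun i => castZ (v i))).toAddSubgroup)

/-- The multiplicity of the family `v`: the index of the subgroup generated by the `v i`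
inside the subgroup of lattice points of their real linear span. -/
def multOf {n : ℕ} {ι : Type*} (v : ι → (Fin n → ℤ)) : ℕ :=
  AddSubgroup.relIndex ((Submodule.span ℤ (Set.range v)).toAddSubgroup) (latticeOfSpan v)

/-- Integer dot product. -/
def dotZ {n : ℕ} (x y : Fin n → ℤ) : ℤ := ∑ j, x j * y j

end

/-!
Put `f = ⟨w i, ·⟩ : ℤⁿ → ℤ` and let `M ⊆ ℤⁿ` be the lattice spanned by the `v j`. As `w i` is
primitive, `f` is onto, so `[ℤⁿ : M] = [ℤ : f M] · [ker f : M ∩ ker f]`. Since `f` kills every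
`v j` with `j ≠ i`, `f M = d ℤ` with `d = ⟨w i, v i⟩ ≠ 0` and `M ∩ ker f = span {v j | j ≠ i}`;
a dimension count identifies `ker f` with the lattice points of the real span of these `v j`.
Finally `M` has full rank, so all the indices are finite.
-/

open Matrix Submodule

theorem AddSubgroup.index_eq_index_map_mul_relIndex_ker {G H : Type*} [AddCommGroup G]
    [AddGroup H] {f : G →+ H} (hf : Function.Surjective f) (M : AddSubgroup G) :
    M.index = (M.map f).index * M.relIndex f.ker := by
  rw [index_map, f.range_eq_top_of_surjective hf, index_top, mul_one, mul_comm,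
    ← relIndex_sup_right f.ker M, sup_comm, relIndex_mul_index le_sup_left]

theorem Primitive.exists_dotProduct_eq_one {n : ℕ} {u : Fin n → ℤ} (hu : Primitive u) :
    ∃ c : Fin n → ℤ, u ⬝ᵥ c = 1 := by
  set g := univ.gcd u
  have hg : 0 < g := by
    refine lt_of_le_of_ne (Int.nonneg_of_normalize_eq_self Finset.normalize_gcd) (Ne.symm ?_)
    exact fun h => hu.1 (funext fun j => (Finset.gcd_eq_zero_iff.mp h) j (mem_univ j))
  have hu_eq : u = g • fun j => u j / g := by
    funext j
    exact (Int.mul_ediv_cancel' (Finset.gcd_dvd (mem_univ j))).symm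
  obtain ⟨c, hc⟩ := Finset.gcd_eq_sum_mul univ u
  exact ⟨c, by rw [dotProduct, ← hc]; exact hu.2 g _ hg hu_eq⟩

theorem Primitive.dotProduct_surjective {n : ℕ} {u : Fin n → ℤ} (hu : Primitive u) :
    Function.Surjective (u ⬝ᵥ ·) := by
  obtain ⟨c, hc⟩ := hu.exists_dotProduct_eq_one
  exact fun m => ⟨m • c, by dsimp only; rw [dotProduct_smul, hc, smul_eq_mul, mul_one]⟩

theorem LinearIndependent.span_eq_ker_of_card_add_one_eq_finrank {K V ι : Type*} [Field K]
    [AddCommGroup V] [Module K V] [FiniteDimensional K V] [Fintype ι] {u : ι → V}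
    (hu : LinearIndependent K u) (hcard : Fintype.card ι + 1 = Module.finrank K V)
    {φ : Module.Dual K V} (hφ : φ ≠ 0) (hφu : ∀ j, φ (u j) = 0) :
    span K (Set.range u) = LinearMap.ker φ := by
  refine eq_of_le_of_finrank_eq (span_le.mpr (Set.range_subset_iff.mpr hφu)) ?_
  have := Module.Dual.finrank_ker_add_one_of_ne_zero hφ
  rw [finrank_span_eq_card hu]
  omega

theorem Fintype.card_subtype_ne_add_one {α : Type*} [Fintype α] [DecidableEq α] (i : α) :
    Fintype.card {j // j ≠ i} + 1 = Fintype.card α := by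
  rw [Fintype.card_subtype_compl, Fintype.card_subtype_eq]
  exact Nat.sub_add_cancel (Fintype.card_pos_iff.mpr ⟨i⟩)

theorem range_subtype_ne_eq_image_compl {ι α : Type*} (v : ι → α) (i : ι) :
    Set.range (fun j : {j // j ≠ i} => v j) = v '' {i}ᶜ := by
  ext; simp

section SpanKer

variable {R G ι : Type*} [CommRing R] [AddCommGroup G] [Module R G] {f : G →ₗ[R] R}
  {v : ι → G} {i : ι}

theorem span_range_subtype_ne_le_ker (hv : ∀ j ≠ i, f (v j) = 0) :
    span R (Set.range fun j : {j // j ≠ i} => v j) ≤ LinearMap.ker f :=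
  span_le.mpr (Set.range_subset_iff.mpr fun j => hv j j.2)

theorem mem_span_range_iff_exists_smul_add (x : G) :
    x ∈ span R (Set.range v) ↔
      ∃ a : R, ∃ z ∈ span R (Set.range fun j : {j // j ≠ i} => v j), x = a • v i + z := by
  rw [← Set.insert_image_compl_eq_range v i, ← range_subtype_ne_eq_image_compl, mem_span_insert]

theorem map_span_range_eq_span_singleton (hv : ∀ j ≠ i, f (v j) = 0) :
    (span R (Set.range v)).map f = R ∙ f (v i) := by
  refine Submodule.ext fun y => ?_
  simp only [Submodule.mem_map, mem_span_range_iff_exists_smul_add (i := i), mem_span_singleton]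
  constructor
  · rintro ⟨x, ⟨a, z, hz, rfl⟩, rfl⟩
    exact ⟨a, by simp [LinearMap.mem_ker.mp (span_range_subtype_ne_le_ker hv hz)]⟩
  · rintro ⟨a, rfl⟩
    exact ⟨a • v i, ⟨a, 0, zero_mem _, by simp⟩, by simp⟩

theorem span_range_inf_ker_eq [NoZeroDivisors R] (hv : ∀ j ≠ i, f (v j) = 0)
    (hvi : f (v i) ≠ 0) :
    span R (Set.range v) ⊓ LinearMap.ker f = span R (Set.range fun j : {j // j ≠ i} => v j) := by
  refine le_antisymm ?_ (le_inf (span_mono ?_) (span_range_subtype_ne_le_ker hv))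
  · rintro x ⟨hx, hfx⟩
    obtain ⟨a, z, hz, rfl⟩ := (mem_span_range_iff_exists_smul_add (i := i) x).mp hx
    have ha : a = 0 := by
      simpa [LinearMap.mem_ker.mp (span_range_subtype_ne_le_ker hv hz), hvi] using hfx
    simpa [ha] using hz
  · rintro _ ⟨j, rfl⟩
    exact ⟨j, rfl⟩

end SpanKer

section Lattice

variable {n : ℕ}

theorem castZ_dotProduct_castZ (x y : Fin n → ℤ) : castZ x ⬝ᵥ castZ y = ((x ⬝ᵥ y : ℤ) : ℝ) := by
  simp [castZ, dotProduct]

theorem linearIndependent_int_of_castZ {ι : Type*} {v : ι → Fin n → ℤ}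
    (hv : LinearIndependent ℝ fun j => castZ (v j)) : LinearIndependent ℤ v :=
  (hv.restrict_scalars' ℤ).of_comp (castHom n).toIntLinearMap

theorem index_span_ne_zero {v : Fin n → Fin n → ℤ}
    (hv : LinearIndependent ℝ fun j => castZ (v j)) :
    (span ℤ (Set.range v)).toAddSubgroup.index ≠ 0 :=
  Int.submodule_toAddSubgroup_index_ne_zero_iff.mpr
    ⟨(Module.Basis.span (linearIndependent_int_of_castZ hv)).equivFun⟩

theorem latticeOfSpan_eq_top {v : Fin n → Fin n → ℤ}
    (hv : LinearIndependent ℝ fun j => castZ (v j)) : latticeOfSpan v = ⊤ := by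
  have hspan : span ℝ (Set.range fun j => castZ (v j)) = ⊤ :=
    hv.span_eq_top_of_card_eq_finrank' (by simp)
  rw [latticeOfSpan, hspan]
  rfl

theorem latticeOfSpan_eq_ker {ι : Type*} [Fintype ι] {v : ι → Fin n → ℤ}
    (hv : LinearIndependent ℝ fun j => castZ (v j)) (hcard : Fintype.card ι + 1 = n)
    {u : Fin n → ℤ} (hu : u ≠ 0) (huv : ∀ j, u ⬝ᵥ v j = 0) :
    latticeOfSpan v = (LinearMap.ker (dotProductBilin ℤ ℤ u)).toAddSubgroup := by
  set φ := dotProductBilin ℝ ℝ (castZ u)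
  have hφ : φ ≠ 0 := by
    obtain ⟨j, hj⟩ := Function.ne_iff.mp hu
    refine fun h => hj ?_
    simpa [φ, castZ] using LinearMap.congr_fun h (Pi.single j 1)
  have hspan := hv.span_eq_ker_of_card_add_one_eq_finrank (by simpa using hcard) hφ
    (fun j => by simp [φ, castZ_dotProduct_castZ, huv])
  ext x
  simp [latticeOfSpan, hspan, φ, castHom, castZ_dotProduct_castZ]

theorem multOf_eq_index {v : Fin n → Fin n → ℤ} (hv : LinearIndependent ℝ fun j => castZ (v j)) :
    multOf v = (span ℤ (Set.range v)).toAddSubgroup.index := by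
  rw [multOf, latticeOfSpan_eq_top hv, AddSubgroup.relIndex_top_right]

section Dual

variable {v : Fin n → Fin n → ℤ} {u : Fin n → ℤ} {i : Fin n}

theorem multOf_subtype_ne_eq_relIndex_ker (hv : LinearIndependent ℝ fun j => castZ (v j))
    (hu : u ≠ 0) (huv : ∀ j ≠ i, u ⬝ᵥ v j = 0) (hui : u ⬝ᵥ v i ≠ 0) :
    multOf (fun j : {j // j ≠ i} => v j) =
      (span ℤ (Set.range v)).toAddSubgroup.relIndex
        (dotProductBilin ℤ ℤ u : (Fin n → ℤ) →+ ℤ).ker := by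
  have hinf : (span ℤ (Set.range v)).toAddSubgroup ⊓
      (LinearMap.ker (dotProductBilin ℤ ℤ u)).toAddSubgroup =
      (span ℤ (Set.range fun j : {j // j ≠ i} => v j)).toAddSubgroup :=
    congrArg toAddSubgroup (span_range_inf_ker_eq huv hui)
  rw [multOf, latticeOfSpan_eq_ker (hv.comp _ Subtype.val_injective)
    ((Fintype.card_subtype_ne_add_one i).trans (Fintype.card_fin n)) hu (fun j => huv j j.2),
    ← hinf, AddSubgroup.inf_relIndex_right]
  rfl

theorem index_map_dotProduct_span (huv : ∀ j ≠ i, u ⬝ᵥ v j = 0) :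
    ((span ℤ (Set.range v)).toAddSubgroup.map (dotProductBilin ℤ ℤ u : (Fin n → ℤ) →+ ℤ)).index =
      (u ⬝ᵥ v i).natAbs := by
  rw [← map_toAddSubgroup, map_span_range_eq_span_singleton (f := dotProductBilin ℤ ℤ u) huv,
    span_int_eq_addSubgroupClosure, ← AddSubgroup.zmultiples_eq_closure, Int.index_zmultiples]
  rfl

end Dual

end Lattice

theorem dual_ray_pairing_eq_mult_ratio_general {n : ℕ} (v w : Fin n → (Fin n → ℤ))
    (hvind : LinearIndependent ℝ (fun i => castZ (v i)))
    (hwprim : ∀ i, Primitive (w i))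
    (horth : ∀ i j, i ≠ j → dotZ (w i) (v j) = 0)
    (hpos : ∀ i, 0 < dotZ (w i) (v i)) :
    ∀ i : Fin n,
      (dotZ (v i) (w i) : ℚ) =
        (multOf v : ℚ) / (multOf (fun j : {j : Fin n // j ≠ i} => v (j : Fin n)) : ℚ) := by
  intro i
  have hwv : ∀ j ≠ i, w i ⬝ᵥ v j = 0 := fun j hj => horth i j hj.symm
  have key := (span ℤ (Set.range v)).toAddSubgroup.index_eq_index_map_mul_relIndex_ker
    (f := (dotProductBilin ℤ ℤ (w i) : (Fin n → ℤ) →+ ℤ)) (hwprim i).dotProduct_surjective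
  rw [← multOf_eq_index hvind, index_map_dotProduct_span hwv,
    ← multOf_subtype_ne_eq_relIndex_ker hvind (hwprim i).1 hwv (hpos i).ne'] at key
  have hne : multOf (fun j : {j // j ≠ i} => v j) ≠ 0 := by
    intro h
    exact index_span_ne_zero hvind (by rw [← multOf_eq_index hvind, key, h, mul_zero])
  rw [key, Nat.cast_mul, mul_div_cancel_right₀ _ (Nat.cast_ne_zero.mpr hne), Nat.cast_natAbs,
    abs_of_pos (a := w i ⬝ᵥ v i) (hpos i)]
  exact_mod_cast dotProduct_comm (v i) (w i)

/-- For primitive linearly independent `v₁,...,vₙ ∈ ℤⁿ` and the primitive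
generators `w₁,...,wₙ` of the rays of the dual cone (labeled so that `⟨wᵢ, vⱼ⟩ = 0` for
`i ≠ j` and `⟨wᵢ, vᵢ⟩ > 0`), one has
`⟨vᵢ, wᵢ⟩ = mult(v₁,...,vₙ) / mult(v₁,...,v̂ᵢ,...,vₙ)`. -/
theorem dual_ray_pairing_eq_mult_ratio {n : ℕ} (v w : Fin n → (Fin n → ℤ))
    (hvprim : ∀ i, Primitive (v i))
    (hvind : LinearIndependent ℝ (fun i => castZ (v i)))
    (hwprim : ∀ i, Primitive (w i))
    (horth : ∀ i j, i ≠ j → dotZ (w i) (v j) = 0)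
    (hpos : ∀ i, 0 < dotZ (w i) (v i)) :
    ∀ i : Fin n,
      (dotZ (v i) (w i) : ℚ) =
        (multOf v : ℚ) / (multOf (fun j : {j : Fin n // j ≠ i} => v (j : Fin n)) : ℚ) :=
  dual_ray_pairing_eq_mult_ratio_general v w hvind hwprim horth hpos
end

section
/- Let P be an n-dimensional polytope in ℝ^n, v a vertex of P, and v_1,...,v_n distinct vertices of P each connected to v by an edge. Then for any u ∈ conv(v, v_1,...,v_n) and any vertex w of P not in {v, v_1,...,v_n}, there exist distinct vertices w_1,...,w_m of P, each connected to w by an edge, such that u lies in the translated cone w + Cone(w_1 − w,...,w_m − w), this cone is simplicial, and u does not lie in conv(w, w_1,...,w_m) ∖ conv(w_1,...,w_m). -/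
/-!
Separate the vertex `w` from the other points of `V` by a functional `L`, normalised so that
`L (x - w) ≥ 1` for `x ∈ V \ {w}`. The slice of `P` by `L (· - w) = 1` (the vertex figure) is a
compact convex set, and the ray from `w` through each of its extreme points meets `P` in an edge.
So it has finitely many extreme points, and by Krein–Milman the edge directions at `w` span the
cone of `P` at `w`.

A vertex `z ≠ w` is a nonnegative combination of edge directions of total weight at least `1`:
otherwise `z` would lie in the convex hull of `w` and its neighbours without being one of them.
Such combinations are closed under convex combinations, so `u - w` is one as well. Carathéodory's
exchange makes the directions used linearly independent without decreasing the weight, because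
`L` is positive on all of them; and for independent directions, weight at least `1` says exactly
that `u ∉ conv(w, w₁, …, wₘ) \ conv(w₁, …, wₘ)`.
-/

open Finset

/-- `v` is a vertex (extreme point) of `P`. -/
def IsVertex {n : ℕ} (P : Set (Fin n → ℝ)) (v : Fin n → ℝ) : Prop :=
  v ∈ Set.extremePoints ℝ P

/-- `v` and `w` are distinct vertices of `P` connected by an edge, i.e. the segment
joining them is a one-dimensional extreme (face) subset of `P`. -/
def IsEdge {n : ℕ} (P : Set (Fin n → ℝ)) (v w : Fin n → ℝ) : Prop :=
  v ≠ w ∧ IsVertex P v ∧ IsVertex P w ∧ IsExtreme ℝ P (segment ℝ v w)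

section HeavyCone

variable {ι F : Type*} [AddCommGroup F] [Module ℝ F]

def heavyCone (g : ι → F) (s : Finset ι) : Set F :=
  {d | ∃ c : ι → ℝ, (∀ i ∈ s, 0 ≤ c i) ∧ ∑ i ∈ s, c i • g i = d ∧ 1 ≤ ∑ i ∈ s, c i}

theorem convex_heavyCone (g : ι → F) (s : Finset ι) : Convex ℝ (heavyCone g s) := by
  rintro _ ⟨c, hc, rfl, hc1⟩ _ ⟨d, hd, rfl, hd1⟩ a b ha hb hab
  refine ⟨a • c + b • d, fun i hi => ?_, ?_, ?_⟩
  · simp only [Pi.add_apply, Pi.smul_apply, smul_eq_mul]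
    exact add_nonneg (mul_nonneg ha (hc i hi)) (mul_nonneg hb (hd i hi))
  · simp only [Pi.add_apply, Pi.smul_apply, smul_eq_mul, add_smul, mul_smul, sum_add_distrib,
      ← smul_sum]
  · simp only [Pi.add_apply, Pi.smul_apply, smul_eq_mul, sum_add_distrib, ← mul_sum]
    nlinarith

theorem mem_hull_image_finset_iff {g : ι → F} {s : Finset ι} {d : F} :
    d ∈ PointedCone.hull ℝ (g '' s) ↔
      ∃ c : ι → ℝ, (∀ i ∈ s, 0 ≤ c i) ∧ ∑ i ∈ s, c i • g i = d := by
  rw [Submodule.mem_span_image_finset_iff_exists_fun']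
  constructor
  · rintro ⟨c, rfl⟩
    exact ⟨fun i => c i, fun i _ => (c i).2, rfl⟩
  · rintro ⟨c, hc, rfl⟩
    refine ⟨fun i => ⟨max (c i) 0, le_max_right _ _⟩, sum_congr rfl fun i hi => ?_⟩
    change max (c i) 0 • g i = c i • g i
    rw [max_eq_left (hc i hi)]

theorem exists_pos_of_sum_smul_eq_zero (L : F →ₗ[ℝ] ℝ) {g : ι → F} {s : Finset ι}
    (hL : ∀ i ∈ s, 0 < L (g i)) {ν : ι → ℝ} (hν : ∑ i ∈ s, ν i • g i = 0)
    (hne : ∃ i ∈ s, ν i ≠ 0) : ∃ i ∈ s, 0 < ν i := by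
  by_contra! hnpos
  have hsum : ∑ i ∈ s, ν i * L (g i) = 0 := by simpa using congrArg L hν
  obtain ⟨i, hi, hνi⟩ := hne
  have := (sum_eq_zero_iff_of_nonpos fun j hj =>
    mul_nonpos_of_nonpos_of_nonneg (hnpos j hj) (hL j hj).le).1 hsum i hi
  exact hνi ((mul_eq_zero.1 this).resolve_right (hL i hi).ne')

/-- The exchange step of Carathéodory's theorem. The relation `ν` is chosen of nonpositive total
weight, so subtracting a multiple of it does not decrease the weight. -/
theorem exists_erase_mem_heavyCone [DecidableEq ι] (L : F →ₗ[ℝ] ℝ) {g : ι → F} {s : Finset ι}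
    (hL : ∀ i ∈ s, 0 < L (g i)) {d : F} (hd : d ∈ heavyCone g s)
    (hdep : ¬LinearIndepOn ℝ g s) : ∃ j ∈ s, d ∈ heavyCone g (s.erase j) := by
  obtain ⟨c, hc0, rfl, hc1⟩ := hd
  obtain ⟨μ, hμ, hμne⟩ := not_linearIndepOn_finset_iff.1 hdep
  obtain ⟨ν, hν, hνsum, hνne⟩ : ∃ ν : ι → ℝ, ∑ i ∈ s, ν i • g i = 0 ∧
      ∑ i ∈ s, ν i ≤ 0 ∧ ∃ i ∈ s, ν i ≠ 0 := by
    rcases le_total (∑ i ∈ s, μ i) 0 with h | h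
    · exact ⟨μ, hμ, h, hμne⟩
    · refine ⟨-μ, by simp [neg_smul, hμ], by simpa using h, ?_⟩
      obtain ⟨i, hi, hμi⟩ := hμne
      exact ⟨i, hi, neg_ne_zero.2 hμi⟩
  obtain ⟨i₀, hi₀, hνi₀⟩ := exists_pos_of_sum_smul_eq_zero L hL hν hνne
  obtain ⟨j, hj, hjmin⟩ := (s.filter fun i => 0 < ν i).exists_min_image (fun i => c i / ν i)
    ⟨i₀, mem_filter.2 ⟨hi₀, hνi₀⟩⟩
  obtain ⟨hjs, hνj⟩ := mem_filter.1 hj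
  set t := c j / ν j
  have ht : 0 ≤ t := div_nonneg (hc0 j hjs) hνj.le
  have hc'0 : ∀ i ∈ s, 0 ≤ c i - t * ν i := by
    intro i hi
    rcases le_or_gt (ν i) 0 with hνi | hνi
    · nlinarith [hc0 i hi]
    · have := hjmin i (mem_filter.2 ⟨hi, hνi⟩)
      rw [le_div_iff₀ hνi] at this
      linarith
  have hc'j : c j - t * ν j = 0 := by simp [t, hνj.ne']
  refine ⟨j, hjs, fun i => c i - t * ν i, fun i hi => hc'0 i (mem_of_mem_erase hi), ?_, ?_⟩
  · rw [sum_erase _ (by simp [hc'j])]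
    simp [sub_smul, mul_smul, sum_sub_distrib, ← smul_sum, hν]
  · rw [sum_erase (f := fun i => c i - t * ν i) _ hc'j, sum_sub_distrib, ← mul_sum]
    nlinarith

theorem exists_linearIndepOn_mem_heavyCone (L : F →ₗ[ℝ] ℝ) {g : ι → F} {s : Finset ι}
    (hL : ∀ i ∈ s, 0 < L (g i)) {d : F} (hd : d ∈ heavyCone g s) :
    ∃ t ⊆ s, LinearIndepOn ℝ g t ∧ d ∈ heavyCone g t := by
  classical
  induction s using Finset.strongInduction with
  | H s ih =>
    by_cases hli : LinearIndepOn ℝ g s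
    · exact ⟨s, subset_rfl, hli, hd⟩
    obtain ⟨j, hj, hdj⟩ := exists_erase_mem_heavyCone L hL hd hli
    obtain ⟨t, hts, ht, hdt⟩ :=
      ih _ (erase_ssubset hj) (fun i hi => hL i (mem_of_mem_erase hi)) hdj
    exact ⟨t, hts.trans (erase_subset _ _), ht, hdt⟩

end HeavyCone

section ConeAtPoint

variable {E : Type*} [AddCommGroup E] [Module ℝ E]

theorem smul_add_smul_sub_of_add_eq_one {a b : ℝ} (hab : a + b = 1) (y z w : E) :
    a • y + b • z - w = a • (y - w) + b • (z - w) := by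
  linear_combination (norm := module) hab • w

theorem Convex.setOf_sub_mem {s : Set E} (hs : Convex ℝ s) (w : E) :
    Convex ℝ {y | y - w ∈ s} := by
  have := hs.translate_preimage_right (-w)
  simp only [neg_add_eq_sub] at this
  exact this

theorem mem_convexHull_insert_iff {w y : E} {T : Finset E} :
    y ∈ convexHull ℝ (insert w (T : Set E)) ↔
      ∃ c : E → ℝ, (∀ x ∈ T, 0 ≤ c x) ∧ ∑ x ∈ T, c x ≤ 1 ∧ ∑ x ∈ T, c x • (x - w) = y - w := by
  classical
  constructor
  · rw [← coe_insert, Finset.mem_convexHull']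
    rintro ⟨c, hc0, hc1, rfl⟩
    refine ⟨c, fun x hx => hc0 x (mem_insert_of_mem hx), ?_, ?_⟩
    · exact hc1 ▸ sum_le_sum_of_subset_of_nonneg (subset_insert _ _) fun x hx _ => hc0 x hx
    · rw [← sum_insert_of_eq_zero_if_notMem (a := w) (by simp)]
      simp [smul_sub, sum_sub_distrib, ← sum_smul, hc1]
  · rintro ⟨c, hc0, hc1, hcy⟩
    have hmem := (convex_convexHull ℝ (insert w (T : Set E))).sum_mem (t := T.insertNone)
      (w := fun o => o.elim (1 - ∑ x ∈ T, c x) c) (z := fun o => o.elim w id)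
      (by rintro (_ | x) hx
          · simpa using hc1
          · exact hc0 x (by simpa using hx))
      (by simp [sum_insertNone])
      (by rintro (_ | x) hx
          · exact subset_convexHull ℝ _ (Set.mem_insert _ _)
          · exact subset_convexHull ℝ _ (Set.mem_insert_of_mem _ (by simpa using hx)))
    convert hmem using 1
    simp only [smul_sub, sum_sub_distrib, ← sum_smul] at hcy
    rw [sum_insertNone, Option.elim_none, Option.elim_none, sub_smul, one_smul]
    simp only [Option.elim_some, id]
    rw [← sub_add_cancel y w, ← hcy]
    abel

theorem notMem_convexHull_insert_diff {w u : E} {t : Finset E}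
    (hli : LinearIndepOn ℝ (· - w) (t : Set E)) (hu : u - w ∈ heavyCone (· - w) t) :
    u ∉ convexHull ℝ (insert w (t : Set E)) \ convexHull ℝ t := by
  rintro ⟨hin, hout⟩
  obtain ⟨c, hc0, hcu, hc1⟩ := hu
  obtain ⟨b, -, hb1, hbu⟩ := mem_convexHull_insert_iff.1 hin
  have hcb : ∀ x ∈ t, c x - b x = 0 :=
    linearIndepOn_finset_iff.1 hli (c - b) (by simp [sub_smul, sum_sub_distrib, hcu, hbu])
  have hsum : ∑ x ∈ t, c x = 1 :=
    le_antisymm ((sum_congr rfl fun x hx => sub_eq_zero.1 (hcb x hx)).trans_le hb1) hc1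
  refine hout (Finset.mem_convexHull'.2 ⟨c, hc0, hsum, ?_⟩)
  simpa [smul_sub, sum_sub_distrib, ← sum_smul, hsum] using hcu

theorem sub_mem_heavyCone_of_mem_extremePoints {P : Set E} (hP : Convex ℝ P) {w z : E}
    {X : Finset E} (hwP : w ∈ P) (hXP : (X : Set E) ⊆ P) (hz : z ∈ P.extremePoints ℝ)
    (hzw : z ≠ w) (hcone : z - w ∈ PointedCone.hull ℝ ((· - w) '' X)) :
    z - w ∈ heavyCone (· - w) X := by
  classical
  obtain ⟨c, hc0, hcz⟩ := mem_hull_image_finset_iff.1 hcone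
  by_cases hc1 : 1 ≤ ∑ x ∈ X, c x
  · exact ⟨c, hc0, hcz, hc1⟩
  have hzX : z ∈ X := by
    have hzK : z ∈ convexHull ℝ (insert w (X : Set E)) :=
      mem_convexHull_insert_iff.2 ⟨c, hc0, (not_le.1 hc1).le, hcz⟩
    have hKP : convexHull ℝ (insert w (X : Set E)) ⊆ P :=
      convexHull_min (Set.insert_subset hwP hXP) hP
    have := extremePoints_convexHull_subset
      (inter_extremePoints_subset_extremePoints_of_subset hKP ⟨hzK, hz⟩)
    exact (Set.mem_insert_iff.1 this).resolve_left hzw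
  exact ⟨fun x => if x = z then 1 else 0, fun x _ => by positivity, by simp [hzX], by simp [hzX]⟩

theorem right_mem_extremePoints_segment (x y : E) : y ∈ (segment ℝ x y).extremePoints ℝ := by
  refine mem_extremePoints_iff_left.2 ⟨right_mem_segment ℝ x y, ?_⟩
  rintro a ha b hb ⟨α, β, hα, hβ, hαβ, hy⟩
  rw [segment_eq_image'] at ha hb
  obtain ⟨s, ⟨-, hs1⟩, rfl⟩ := ha
  obtain ⟨s', ⟨-, hs'1⟩, rfl⟩ := hb
  have h : (1 - (α * s + β * s')) • (y - x) = 0 := by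
    linear_combination (norm := module) hαβ • x - hy
  rcases smul_eq_zero.1 h with h | h
  · have : s = 1 := by nlinarith
    simp [this]
  · simp [sub_eq_zero.1 h]

theorem exists_fin_of_mem_heavyCone {w u : E} {t : Finset E}
    (hli : LinearIndepOn ℝ (· - w) (t : Set E)) (hu : u - w ∈ heavyCone (· - w) t) :
    ∃ (m : ℕ) (ws : Fin m → E), Function.Injective ws ∧ Set.range ws = t ∧
      (∃ c : Fin m → ℝ, (∀ i, 0 ≤ c i) ∧ u = w + ∑ i, c i • (ws i - w)) ∧
      LinearIndependent ℝ (fun i => ws i - w) ∧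
      u ∉ convexHull ℝ (insert w (Set.range ws)) \ convexHull ℝ (Set.range ws) := by
  obtain ⟨m, f, hf⟩ := t.finite_toSet.fin_embedding
  have ht : t = univ.map f := coe_injective (by simp [hf])
  refine ⟨m, f, f.injective, hf, ?_, ?_, hf ▸ notMem_convexHull_insert_diff hli hu⟩
  · obtain ⟨c, hc0, hcu, -⟩ := hu
    refine ⟨fun i => c (f i), fun i => hc0 _ (ht ▸ mem_map_of_mem _ (mem_univ i)), ?_⟩
    rw [← sum_map univ f (fun x => c x • (x - w)), ← ht, hcu, add_sub_cancel]
  · rw [← hf] at hli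
    exact (linearIndepOn_range_iff f.injective _).1 hli

end ConeAtPoint

section VertexFigure

variable {E : Type*} [NormedAddCommGroup E] [NormedSpace ℝ E]

theorem exists_one_le_apply_sub {V : Finset E} {w : E}
    (hw : w ∈ (convexHull ℝ (V : Set E)).extremePoints ℝ) :
    ∃ L : E →L[ℝ] ℝ, ∀ x ∈ V, x ≠ w → 1 ≤ L (x - w) := by
  classical
  have hw' : w ∉ convexHull ℝ ((V.erase w : Finset E) : Set E) := fun h => by
    have hsub : convexHull ℝ ((V.erase w : Finset E) : Set E) ⊆ convexHull ℝ V :=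
      convexHull_mono (by simp)
    simpa using extremePoints_convexHull_subset
      (inter_extremePoints_subset_extremePoints_of_subset hsub ⟨h, hw⟩)
  obtain ⟨f, r, hfr, hrw⟩ := geometric_hahn_banach_closed_point (convex_convexHull ℝ _)
    ((V.erase w).finite_toSet.isClosed_convexHull ℝ) hw'
  refine ⟨(f w - r)⁻¹ • (-f), fun x hx hxw => ?_⟩
  have hfx := hfr x (subset_convexHull ℝ _ (by simp [hx, hxw]))
  rw [smul_apply, smul_eq_mul, ← div_eq_inv_mul, le_div_iff₀ (by linarith)]
  simp
  linarith

noncomputable def centralProj (L : E →L[ℝ] ℝ) (w y : E) : E := w + (L (y - w))⁻¹ • (y - w)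

variable {L : E →L[ℝ] ℝ} {w : E}

theorem apply_centralProj_sub {y : E} (hy : L (y - w) ≠ 0) : L (centralProj L w y - w) = 1 := by
  rw [centralProj, add_sub_cancel_left, map_smul, smul_eq_mul, inv_mul_cancel₀ hy]

theorem centralProj_mem_openSegment {y z p : E} (hy : 0 < L (y - w)) (hz : 0 < L (z - w))
    (hp : p ∈ openSegment ℝ y z) :
    centralProj L w p ∈ openSegment ℝ (centralProj L w y) (centralProj L w z) := by
  obtain ⟨a, b, ha, hb, hab, rfl⟩ := hp
  have hLp : L (a • (y - w) + b • (z - w)) = a * L (y - w) + b * L (z - w) := by simp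
  have hpos : 0 < a * L (y - w) + b * L (z - w) := by positivity
  refine ⟨a * L (y - w) / (a * L (y - w) + b * L (z - w)),
    b * L (z - w) / (a * L (y - w) + b * L (z - w)),
    by positivity, by positivity, by rw [← add_div, div_self hpos.ne'], ?_⟩
  simp only [centralProj, smul_add_smul_sub_of_add_eq_one hab, hLp]
  match_scalars <;> field_simp
  ring

variable {V : Finset E}

def vertexFigure (V : Finset E) (w : E) (L : E →L[ℝ] ℝ) : Set E :=
  convexHull ℝ (V : Set E) ∩ {q | L (q - w) = 1}

theorem isCompact_vertexFigure : IsCompact (vertexFigure V w L) :=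
  (V.finite_toSet.isCompact_convexHull ℝ).inter_right (isClosed_eq (by fun_prop) continuous_const)

theorem convex_vertexFigure : Convex ℝ (vertexFigure V w L) := by
  refine (convex_convexHull ℝ _).inter fun q hq r hr a b _ _ hab => ?_
  change L (q - w) = 1 at hq
  change L (r - w) = 1 at hr
  change L (a • q + b • r - w) = 1
  simpa [smul_add_smul_sub_of_add_eq_one hab, hq, hr] using hab

section

variable (hwV : w ∈ V) (hL : ∀ x ∈ V, x ≠ w → 1 ≤ L (x - w))
include hwV hL

/-- Write `y - w = ∑ c x • (x - w)` over `V \ {w}` with `∑ c ≤ 1`; as `L (x - w) ≥ 1` there,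
rescaling `c` by `(L (y - w))⁻¹` keeps `∑ c ≤ 1`. -/
theorem eq_or_centralProj_mem {y : E} (hy : y ∈ convexHull ℝ (V : Set E)) :
    y = w ∨ 0 < L (y - w) ∧ centralProj L w y ∈ convexHull ℝ (V : Set E) := by
  classical
  have hV : (V : Set E) = insert w ((V.erase w : Finset E) : Set E) := by
    simp [Set.insert_eq_of_mem (mem_coe.2 hwV)]
  rw [hV, mem_convexHull_insert_iff] at hy ⊢
  obtain ⟨c, hc0, hc1, hcy⟩ := hy
  have hle : ∑ x ∈ V.erase w, c x ≤ L (y - w) := by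
    rw [← hcy, map_sum]
    exact sum_le_sum fun x hx => by
      simpa using le_mul_of_one_le_right (hc0 x hx)
        (hL x (mem_of_mem_erase hx) (ne_of_mem_erase hx))
  rcases (sum_nonneg hc0).eq_or_lt with h0 | hpos
  · left
    rw [← sub_eq_zero, ← hcy]
    exact sum_eq_zero fun x hx => by simp [(sum_eq_zero_iff_of_nonneg hc0).1 h0.symm x hx]
  · have hLy : 0 < L (y - w) := hpos.trans_le hle
    refine .inr ⟨hLy, fun x => c x / L (y - w), fun x hx => div_nonneg (hc0 x hx) hLy.le,
      ?_, ?_⟩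
    · rw [← sum_div]
      exact div_le_one_of_le₀ hle hLy.le
    · simp [centralProj, div_eq_inv_mul, mul_smul, ← smul_sum, hcy]

theorem apply_sub_nonneg {y : E} (hy : y ∈ convexHull ℝ (V : Set E)) : 0 ≤ L (y - w) := by
  rcases eq_or_centralProj_mem hwV hL hy with rfl | ⟨h, -⟩
  · simp
  · exact h.le

/-- If a point of the ray lies in an open segment `(y, z)` with `y, z ≠ w`, then `e` lies in the
open segment between the central projections of `y` and `z`, so both of these equal `e`. -/
theorem isExtreme_inter_ray {e : E} (he : e ∈ (vertexFigure V w L).extremePoints ℝ) :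
    IsExtreme ℝ (convexHull ℝ (V : Set E))
      {y ∈ convexHull ℝ (V : Set E) | ∃ t : ℝ, y - w = t • (e - w)} := by
  refine ⟨fun y hy => hy.1, fun y hy z hz p hpray hp => ⟨hy, ?_⟩⟩
  obtain ⟨-, t, hpt⟩ := hpray
  have hLe : L (e - w) = 1 := he.1.2
  rcases eq_or_centralProj_mem hwV hL hy with rfl | ⟨hLy, hyP⟩
  · exact ⟨0, by simp⟩
  obtain ⟨a, b, ha, hb, hab, rfl⟩ := hp
  have hsub := smul_add_smul_sub_of_add_eq_one hab y z w
  rcases eq_or_centralProj_mem hwV hL hz with rfl | ⟨hLz, hzP⟩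
  · refine ⟨t / a, ?_⟩
    rw [div_eq_inv_mul, mul_smul, ← hpt, hsub, sub_self, smul_zero, add_zero,
      inv_smul_smul₀ ha.ne']
  have hLp : L (a • y + b • z - w) = t := by rw [hpt, map_smul, hLe, smul_eq_mul, mul_one]
  have ht : 0 < t := by
    rw [← hLp, hsub, map_add, map_smul, map_smul]
    positivity
  have hpe : centralProj L w (a • y + b • z) = e := by
    rw [centralProj, hLp, hpt, inv_smul_smul₀ ht.ne', add_sub_cancel]
  have hye := (he.2 ⟨hyP, apply_centralProj_sub hLy.ne'⟩ ⟨hzP, apply_centralProj_sub hLz.ne'⟩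
    (hpe ▸ centralProj_mem_openSegment hLy hLz ⟨a, b, ha, hb, hab, rfl⟩))
  refine ⟨L (y - w), ?_⟩
  rw [← hye, centralProj, add_sub_cancel_left, smul_inv_smul₀ hLy.ne']

/-- The ray face is the segment from `w` to its farthest point. -/
theorem exists_isExtreme_segment {e : E} (he : e ∈ (vertexFigure V w L).extremePoints ℝ) :
    ∃ x, IsExtreme ℝ (convexHull ℝ (V : Set E)) (segment ℝ w x) ∧ centralProj L w x = e := by
  have hLe : L (e - w) = 1 := he.1.2
  have hP : IsCompact (convexHull ℝ (V : Set E)) := V.finite_toSet.isCompact_convexHull ℝ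
  set T := (fun t : ℝ => w + t • (e - w)) ⁻¹' convexHull ℝ (V : Set E)
  have hTclosed : IsClosed T := hP.isClosed.preimage (by fun_prop)
  have hTbdd : BddAbove T := by
    obtain ⟨M, hM⟩ := hP.bddAbove_image (f := fun y => L (y - w)) (by fun_prop)
    exact ⟨M, fun t ht => by simpa [hLe] using hM ⟨_, ht, rfl⟩⟩
  have h1T : (1 : ℝ) ∈ T := by simpa [T] using he.1.1
  have hτT : sSup T ∈ T := hTclosed.csSup_mem ⟨1, h1T⟩ hTbdd
  have hτ : 0 < sSup T := one_pos.trans_le (le_csSup hTbdd h1T)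
  refine ⟨w + sSup T • (e - w), ?_, ?_⟩
  · convert isExtreme_inter_ray hwV hL he using 1
    ext y
    rw [segment_eq_image']
    constructor
    · rintro ⟨θ, ⟨hθ0, hθ1⟩, rfl⟩
      refine ⟨(convex_convexHull ℝ _).segment_subset (subset_convexHull ℝ _ hwV) hτT ?_,
        θ * sSup T, by simp [mul_smul]⟩
      rw [segment_eq_image']
      exact ⟨θ, ⟨hθ0, hθ1⟩, rfl⟩
    · rintro ⟨hy, t, ht⟩
      have hLy : L (y - w) = t := by simp [ht, hLe]
      have htT : t ∈ T := by simpa [T, ← ht] using hy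
      refine ⟨t / sSup T, ⟨div_nonneg (hLy ▸ apply_sub_nonneg hwV hL hy) hτ.le,
        div_le_one_of_le₀ (le_csSup hTbdd htT) hτ.le⟩, ?_⟩
      dsimp only
      rw [add_sub_cancel_left, smul_smul, div_mul_cancel₀ _ hτ.ne', ← ht, add_sub_cancel]
  · rw [centralProj, add_sub_cancel_left, map_smul, hLe, smul_eq_mul, mul_one,
      inv_smul_smul₀ hτ.ne', add_sub_cancel]

end

open Classical in
noncomputable def edgeNeighbors (V : Finset E) (w : E) : Finset E :=
  V.filter fun x => x ≠ w ∧ IsExtreme ℝ (convexHull ℝ (V : Set E)) (segment ℝ w x)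

theorem mem_edgeNeighbors {x : E} : x ∈ edgeNeighbors V w ↔
    x ∈ V ∧ x ≠ w ∧ IsExtreme ℝ (convexHull ℝ (V : Set E)) (segment ℝ w x) := by
  simp [edgeNeighbors]

theorem extremePoints_vertexFigure_subset (hwV : w ∈ V) (hL : ∀ x ∈ V, x ≠ w → 1 ≤ L (x - w)) :
    (vertexFigure V w L).extremePoints ℝ ⊆ centralProj L w '' edgeNeighbors V w := by
  intro e he
  obtain ⟨x, hx, rfl⟩ := exists_isExtreme_segment hwV hL he
  refine ⟨x, mem_edgeNeighbors.2 ⟨extremePoints_convexHull_subset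
    (hx.extremePoints_subset_extremePoints (right_mem_extremePoints_segment w x)), ?_, hx⟩, rfl⟩
  rintro rfl
  simpa [centralProj] using he.1.2

theorem sub_mem_hull_edgeNeighbors (hw : w ∈ (convexHull ℝ (V : Set E)).extremePoints ℝ)
    {y : E} (hy : y ∈ convexHull ℝ (V : Set E)) :
    y - w ∈ PointedCone.hull ℝ ((· - w) '' edgeNeighbors V w) := by
  have hwV : w ∈ V := extremePoints_convexHull_subset hw
  obtain ⟨L, hL⟩ := exists_one_le_apply_sub hw
  set C := PointedCone.hull ℝ ((· - w) '' edgeNeighbors V w)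
  have hfin : ((vertexFigure V w L).extremePoints ℝ).Finite :=
    ((edgeNeighbors V w).finite_toSet.image _).subset (extremePoints_vertexFigure_subset hwV hL)
  have hQC : vertexFigure V w L ⊆ {q | q - w ∈ C} := by
    rw [← closure_convexHull_extremePoints (isCompact_vertexFigure (L := L))
      (convex_vertexFigure (V := V) (w := w)),
      (hfin.isClosed_convexHull ℝ).closure_eq]
    refine convexHull_min (fun e he => ?_) (C.convex.setOf_sub_mem w)
    obtain ⟨x, hx, rfl⟩ := extremePoints_vertexFigure_subset hwV hL he
    obtain ⟨hxV, hxw, -⟩ := mem_edgeNeighbors.1 hx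
    change centralProj L w x - w ∈ C
    rw [centralProj, add_sub_cancel_left]
    exact C.smul_mem (inv_nonneg.2 (zero_le_one.trans (hL x hxV hxw)))
      (PointedCone.subset_hull ⟨x, hx, rfl⟩)
  rcases eq_or_centralProj_mem hwV hL hy with rfl | ⟨hLy, hyP⟩
  · simp
  · have := hQC ⟨hyP, apply_centralProj_sub hLy.ne'⟩
    change centralProj L w y - w ∈ C at this
    rw [centralProj, add_sub_cancel_left] at this
    simpa only [smul_inv_smul₀ hLy.ne'] using C.smul_mem hLy.le this

end VertexFigure

theorem lemma_non_adjacent_general {n : ℕ} (V : Finset (Fin n → ℝ))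
    (P : Set (Fin n → ℝ)) (hP : P = convexHull ℝ (V : Set (Fin n → ℝ)))
    (v : Fin n → ℝ) (hv : IsVertex P v)
    (vs : Fin n → (Fin n → ℝ))
    (hedge : ∀ i, IsEdge P v (vs i))
    (u : Fin n → ℝ) (hu : u ∈ convexHull ℝ (insert v (Set.range vs)))
    (w : Fin n → ℝ) (hw : IsVertex P w) (hwv : w ≠ v) (hwvs : ∀ i, w ≠ vs i) :
    ∃ (m : ℕ) (ws : Fin m → (Fin n → ℝ)),
      Function.Injective ws ∧
      (∀ i, IsEdge P w (ws i)) ∧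
      (∃ c : Fin m → ℝ, (∀ i, 0 ≤ c i) ∧ u = w + ∑ i, c i • (ws i - w)) ∧
      LinearIndependent ℝ (fun i => ws i - w) ∧
      u ∉ convexHull ℝ (insert w (Set.range ws)) \ convexHull ℝ (Set.range ws) := by
  subst hP
  set X := edgeNeighbors V w
  have hheavy : ∀ z, IsVertex (convexHull ℝ (V : Set (Fin n → ℝ))) z → z ≠ w →
      z - w ∈ heavyCone (· - w) X := fun z hz hzw =>
    sub_mem_heavyCone_of_mem_extremePoints (convex_convexHull ℝ _) hw.1
      (fun x hx => subset_convexHull ℝ _ (mem_edgeNeighbors.1 hx).1) hz hzw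
      (sub_mem_hull_edgeNeighbors hw hz.1)
  have huX : u - w ∈ heavyCone (· - w) X := by
    refine convexHull_min ?_ ((convex_heavyCone (· - w) X).setOf_sub_mem w) hu
    rintro _ (rfl | ⟨i, rfl⟩)
    exacts [hheavy _ hv hwv.symm, hheavy _ (hedge i).2.2.1 (hwvs i).symm]
  obtain ⟨L, hL⟩ := exists_one_le_apply_sub hw
  have hLX : ∀ x ∈ X, 0 < L (x - w) := fun x hx =>
    have ⟨hxV, hxw, _⟩ := mem_edgeNeighbors.1 hx
    zero_lt_one.trans_le (hL x hxV hxw)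
  obtain ⟨t, htX, hli, hut⟩ := exists_linearIndepOn_mem_heavyCone (L : _ →ₗ[ℝ] ℝ) hLX huX
  obtain ⟨m, ws, hinj, hrange, hcone, hli', hnot⟩ := exists_fin_of_mem_heavyCone hli hut
  refine ⟨m, ws, hinj, fun i => ?_, hcone, hli', hnot⟩
  have hit : ws i ∈ (t : Set (Fin n → ℝ)) := hrange ▸ Set.mem_range_self i
  obtain ⟨-, hxw, hseg⟩ := mem_edgeNeighbors.1 (htX hit)
  exact ⟨hxw.symm, hw, hseg.extremePoints_subset_extremePoints
    (right_mem_extremePoints_segment w _), hseg⟩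

/-- Let `P` be an `n`-dimensional polytope, `v` a vertex, and
`v₁,...,vₙ` distinct vertices each joined to `v` by an edge.  For any
`u ∈ conv(v, v₁,...,vₙ)` and any vertex `w` of `P` not among `{v, v₁,...,vₙ}`,
there are distinct vertices `w₁,...,wₘ` of `P`, each joined to `w` by an edge, with
`u ∈ w + Cone(w₁ − w,...,wₘ − w)`, this cone simplicial, and
`u ∉ conv(w, w₁,...,wₘ) ∖ conv(w₁,...,wₘ)`. -/
theorem lemma_non_adjacent {n : ℕ} (V : Finset (Fin n → ℝ))
    (P : Set (Fin n → ℝ)) (hP : P = convexHull ℝ (V : Set (Fin n → ℝ)))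
    (hfull : affineSpan ℝ P = ⊤)
    (v : Fin n → ℝ) (hv : IsVertex P v)
    (vs : Fin n → (Fin n → ℝ)) (hvs : Function.Injective vs)
    (hvsv : ∀ i, vs i ≠ v) (hedge : ∀ i, IsEdge P v (vs i))
    (u : Fin n → ℝ) (hu : u ∈ convexHull ℝ (insert v (Set.range vs)))
    (w : Fin n → ℝ) (hw : IsVertex P w) (hwv : w ≠ v) (hwvs : ∀ i, w ≠ vs i) :
    ∃ (m : ℕ) (ws : Fin m → (Fin n → ℝ)),
      Function.Injective ws ∧
      (∀ i, IsEdge P w (ws i)) ∧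
      (∃ c : Fin m → ℝ, (∀ i, 0 ≤ c i) ∧ u = w + ∑ i, c i • (ws i - w)) ∧
      LinearIndependent ℝ (fun i => ws i - w) ∧
      u ∉ convexHull ℝ (insert w (Set.range ws)) \ convexHull ℝ (Set.range ws) :=
  lemma_non_adjacent_general V P hP v hv vs hedge u hu w hw hwv hwvs
end

section
/- Let P be an n-dimensional polytope in ℝ^n with a vertex at the origin w = 0, let w_1,...,w_k be all vertices of P connected to w by an edge, and let W: Cone(w_1,...,w_k) → ℝ be the maximum weight function W(x) = max{ Σ a_i : x = Σ a_i w_i, a_i ≥ 0 }. Then W(z) ≥ 1 for every vertex z of P distinct from w. -/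
/-! If `z = ∑ aᵢ wᵢ` with `aᵢ ≥ 0` and `s = ∑ aᵢ < 1`, then `s⁻¹ • z` is a convex combination
of the `wᵢ`, hence lies in `P`, and `z` lies in the open segment from the vertex `0` to
`s⁻¹ • z`, which is impossible for a vertex `z ≠ 0`. -/

open Finset

section ExtremePoints

variable {𝕜 E ι : Type*} [Field 𝕜] [LinearOrder 𝕜] [IsStrictOrderedRing 𝕜]
  [AddCommGroup E] [Module 𝕜 E] {P : Set E} {z : E}

theorem one_le_of_inv_smul_mem_of_mem_extremePoints (h0 : 0 ∈ P)
    (hz : z ∈ Set.extremePoints 𝕜 P) (hz0 : z ≠ 0) {s : 𝕜} (hs : 0 < s)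
    (hsz : s⁻¹ • z ∈ P) : 1 ≤ s := by
  by_contra! hs1
  have hseg : z ∈ openSegment 𝕜 0 (s⁻¹ • z) :=
    ⟨1 - s, s, sub_pos.2 hs1, hs, sub_add_cancel 1 s, by
      rw [smul_zero, zero_add, smul_inv_smul₀ hs.ne']⟩
  exact hz0 (hz.2 h0 hsz hseg).symm

theorem one_le_sum_of_mem_extremePoints (hP : Convex 𝕜 P) (h0 : 0 ∈ P)
    (hz : z ∈ Set.extremePoints 𝕜 P) (hz0 : z ≠ 0) {t : Finset ι} {a : ι → 𝕜} {w : ι → E}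
    (ha : ∀ i ∈ t, 0 ≤ a i) (hw : ∀ i ∈ t, w i ∈ P) (hza : z = ∑ i ∈ t, a i • w i) :
    1 ≤ ∑ i ∈ t, a i := by
  have hsum : 0 < ∑ i ∈ t, a i := by
    refine (sum_nonneg ha).lt_of_ne fun hzero => hz0 ?_
    rw [hza]
    refine sum_eq_zero fun i hi => ?_
    rw [(sum_eq_zero_iff_of_nonneg ha).1 hzero.symm i hi, zero_smul]
  refine one_le_of_inv_smul_mem_of_mem_extremePoints h0 hz hz0 hsum ?_
  rw [hza]
  exact hP.centerMass_mem ha hsum hw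

end ExtremePoints

theorem vertex_weight_ge_one_general {n k : ℕ} (V : Finset (Fin n → ℝ))
    (P : Set (Fin n → ℝ)) (hP : P = convexHull ℝ (V : Set (Fin n → ℝ)))
    (h0 : IsVertex P 0)
    (w : Fin k → (Fin n → ℝ))
    (hw : ∀ x, IsEdge P 0 x ↔ ∃ i, x = w i)
    (hPcone : P ⊆ {x | inCone w x})
    (hmax : ∀ x, inCone w x → IsGreatest (weightSet w x) (maxWeight w x))
    (z : Fin n → ℝ) (hz : IsVertex P z) (hz0 : z ≠ 0) :
    1 ≤ maxWeight w z := by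
  obtain ⟨a, ha, hza, hW⟩ := (hmax z (hPcone hz.1)).1
  have hwP : ∀ i, w i ∈ P := fun i => ((hw (w i)).2 ⟨i, rfl⟩).2.2.1.1
  rw [hW]
  exact one_le_sum_of_mem_extremePoints (hP ▸ convex_convexHull ℝ _) h0.1 hz hz0
    (fun i _ => ha i) (fun i _ => hwP i) hza

/-- Let `P` be an `n`-dimensional polytope with the origin as a vertex and
let `w₁,...,w_k` be precisely the vertices of `P` joined to the origin by an edge, so
that `P` is contained in the cone they span.  Then the maximum weight function `W`
satisfies `W(z) ≥ 1` for every vertex `z ≠ 0` of `P`. -/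
theorem vertex_weight_ge_one {n k : ℕ} (V : Finset (Fin n → ℝ))
    (P : Set (Fin n → ℝ)) (hP : P = convexHull ℝ (V : Set (Fin n → ℝ)))
    (hfull : affineSpan ℝ P = ⊤)
    (h0 : IsVertex P 0)
    (w : Fin k → (Fin n → ℝ))
    (hw : ∀ x, IsEdge P 0 x ↔ ∃ i, x = w i)
    (hPcone : P ⊆ {x | inCone w x})
    (hmax : ∀ x, inCone w x → IsGreatest (weightSet w x) (maxWeight w x))
    (z : Fin n → ℝ) (hz : IsVertex P z) (hz0 : z ≠ 0) :
    1 ≤ maxWeight w z :=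
  vertex_weight_ge_one_general V P hP h0 w hw hPcone hmax z hz hz0
end

section
/- Let a_0,...,a_n (n ≥ 2) be positive integers with gcd(a_0,...,â_j,...,a_n) = 1 for each j. Let l = lcm(a_0,...,a_n), and let Q be the polytope with vertices (l/a_0)e_0, (l/a_1)e_1, ..., (l/a_n)e_n in the affine hyperplane Λ = { x ∈ ℝ^{n+1} : a_0x_0 + ... + a_nx_n = l }, with lattice Λ ∩ ℤ^{n+1}. Then for each 0 ≤ i < j ≤ n, the lattice length of the edge of Q joining the i-th and j-th vertices equals l / lcm(a_i, a_j). -/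
/-!
Write `L = lcm(aᵢ, aⱼ)`. Then `(l/aⱼ)eⱼ - (l/aᵢ)eᵢ = (l/L) • ((L/aⱼ)eⱼ - (L/aᵢ)eᵢ)`, and the integer
vector on the right lies in `Λ₀` because `aⱼ(L/aⱼ) = L = aᵢ(L/aᵢ)`. It is primitive because its two
nonzero entries `L/aⱼ = aᵢ/gcd(aᵢ, aⱼ)` and `L/aᵢ = aⱼ/gcd(aᵢ, aⱼ)` are coprime.
-/

open Finset

theorem Nat.lcm_div_self_left {a : ℕ} (b : ℕ) (ha : a ≠ 0) : Nat.lcm a b / a = b / Nat.gcd a b := by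
  rw [Nat.lcm, Nat.mul_div_assoc _ (Nat.gcd_dvd_right a b),
    Nat.mul_div_cancel_left _ (Nat.pos_of_ne_zero ha)]

theorem Nat.lcm_div_self_right (a : ℕ) {b : ℕ} (hb : b ≠ 0) : Nat.lcm a b / b = a / Nat.gcd a b := by
  rw [Nat.lcm_comm, Nat.gcd_comm, Nat.lcm_div_self_left a hb]

theorem Nat.coprime_lcm_div_self {a b : ℕ} (ha : a ≠ 0) (hb : b ≠ 0) :
    Nat.Coprime (Nat.lcm a b / a) (Nat.lcm a b / b) := by
  rw [Nat.lcm_div_self_left b ha, Nat.lcm_div_self_right a hb, Nat.coprime_comm]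
  exact Nat.coprime_div_gcd_div_gcd (Nat.gcd_pos_of_pos_left b (Nat.pos_of_ne_zero ha))

theorem primitive_of_isCoprime {n : ℕ} {v : Fin n → ℤ} {i j : Fin n}
    (h : IsCoprime (v i) (v j)) : Primitive v := by
  refine ⟨fun hv => not_isCoprime_zero_zero (by simpa [hv] using h), fun z q hz hvq => ?_⟩
  have hdvd : ∀ k, z ∣ v k := fun k => ⟨q k, by simp [hvq]⟩
  exact Int.eq_one_of_dvd_one hz.le
    (isUnit_iff_dvd_one.mp (h.isUnit_of_dvd' (hdvd i) (hdvd j)))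

section EdgeDirection

variable {m : ℕ} (a : Fin m → ℕ) (i j : Fin m)

def edgeDirection : Fin m → ℤ :=
  Pi.single j ((Nat.lcm (a i) (a j) / a j : ℕ) : ℤ) -
    Pi.single i ((Nat.lcm (a i) (a j) / a i : ℕ) : ℤ)

theorem sum_mul_edgeDirection : ∑ t, (a t : ℤ) * edgeDirection a i j t = 0 := by
  simp only [edgeDirection, Pi.sub_apply, mul_sub, Finset.sum_sub_distrib, Pi.single_apply,
    mul_ite, mul_zero, Finset.sum_ite_eq', Finset.mem_univ, if_true]
  rw [← Nat.cast_mul, ← Nat.cast_mul, Nat.mul_div_cancel' (Nat.dvd_lcm_right _ _),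
    Nat.mul_div_cancel' (Nat.dvd_lcm_left _ _), sub_self]

theorem primitive_edgeDirection (hij : i ≠ j) (hi : a i ≠ 0) (hj : a j ≠ 0) :
    Primitive (edgeDirection a i j) := by
  apply primitive_of_isCoprime (i := j) (j := i)
  simp only [edgeDirection, Pi.sub_apply, Pi.single_eq_same, Pi.single_eq_of_ne hij,
    Pi.single_eq_of_ne hij.symm, sub_zero, zero_sub]
  exact (Nat.isCoprime_iff_coprime.mpr (Nat.coprime_lcm_div_self hi hj).symm).neg_right

theorem edge_vertex_sub_eq_smul_edgeDirection (hi : a i ≠ 0) (hj : a j ≠ 0) (l : ℕ)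
    (t : Fin m) :
    ((if t = j then ((l : ℚ) / (a j : ℚ)) else 0) -
        (if t = i then ((l : ℚ) / (a i : ℚ)) else 0)) =
      ((l : ℚ) / (Nat.lcm (a i) (a j) : ℚ)) * (edgeDirection a i j t : ℚ) := by
  have hL : (Nat.lcm (a i) (a j) : ℚ) ≠ 0 := Nat.cast_ne_zero.mpr (Nat.lcm_ne_zero hi hj)
  simp only [edgeDirection, Pi.sub_apply, Pi.single_apply, Int.cast_sub, Int.cast_ite,
    Int.cast_natCast, Int.cast_zero, mul_sub, mul_ite, mul_zero,
    Nat.cast_div (Nat.dvd_lcm_right _ _) (Nat.cast_ne_zero.mpr hj),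
    Nat.cast_div (Nat.dvd_lcm_left _ _) (Nat.cast_ne_zero.mpr hi), div_mul_div_cancel₀ hL]

end EdgeDirection

theorem weighted_projective_edge_lengths_general (n : ℕ)
    (a : Fin (n + 1) → ℕ) (hpos : ∀ i, 0 < a i)
    (l : ℕ) :
    ∀ i j : Fin (n + 1), i < j →
      ∃ p : Fin (n + 1) → ℤ,
        (∑ t, (a t : ℤ) * p t = 0) ∧ Primitive p ∧
        (∀ t, ((if t = j then ((l : ℚ) / (a j : ℚ)) else 0) -
               (if t = i then ((l : ℚ) / (a i : ℚ)) else 0)) =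
          ((l : ℚ) / (Nat.lcm (a i) (a j) : ℚ)) * (p t : ℚ)) := fun i j hij =>
  ⟨edgeDirection a i j, sum_mul_edgeDirection a i j,
    primitive_edgeDirection a i j hij.ne (hpos i).ne' (hpos j).ne',
    edge_vertex_sub_eq_smul_edgeDirection a i j (hpos i).ne' (hpos j).ne' l⟩

/-- For the weighted projective space polytope `Q` with vertices
`(l/aᵢ)eᵢ` in the hyperplane `Σ aₜxₜ = l` (`l = lcm(a₀,...,aₙ)`, the weights reduced so
that omitting any one of them gives gcd 1), the lattice length of the edge joining the
`i`-th and `j`-th vertices equals `l / lcm(aᵢ, aⱼ)`: the difference of the vertices is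
`l / lcm(aᵢ, aⱼ)` times a primitive vector of the lattice `Λ₀ ∩ ℤ^{n+1}`. -/
theorem weighted_projective_edge_lengths (n : ℕ) (hn : 2 ≤ n)
    (a : Fin (n + 1) → ℕ) (hpos : ∀ i, 0 < a i)
    (hgcd : ∀ j : Fin (n + 1), Finset.gcd (Finset.univ.erase j) a = 1)
    (l : ℕ) (hl : l = Finset.univ.lcm a) :
    ∀ i j : Fin (n + 1), i < j →
      ∃ p : Fin (n + 1) → ℤ,
        (∑ t, (a t : ℤ) * p t = 0) ∧ Primitive p ∧
        (∀ t, ((if t = j then ((l : ℚ) / (a j : ℚ)) else 0) -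
               (if t = i then ((l : ℚ) / (a i : ℚ)) else 0)) =
          ((l : ℚ) / (Nat.lcm (a i) (a j) : ℚ)) * (p t : ℚ)) :=
  weighted_projective_edge_lengths_general n a hpos l
end

section
/- Let M = ℤ^n with n ≥ 2, r > n − 2 a positive integer, a = e_1 + ... + e_{n−1} + r·e_n, and Q = Cone(e_1,...,e_{n−1}, a) ⊆ ℝ^n. Let u = (k−1)e_1 + a_1 where a_1 = e_1 + ... + e_n and k ≥ 1. Let m be the irrelevant maximal ideal of R = k[Q ∩ ℤ^n]. Then χ^u ∈ m^k but χ^u ∉ m^{k+1}. -/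
open Finset

/-- The ray generators of the cone `Q = Cone(e₁, ..., e_{n-1}, a)` from the sharpness
example, where `a = e₁ + ⋯ + e_{n−1} + r·eₙ`. -/
def exGens (n : ℕ) (r : ℕ) : Fin n → (Fin n → ℤ) :=
  fun i => if (i : ℕ) < n - 1 then Pi.single i 1
           else fun j => if (j : ℕ) = n - 1 then (r : ℤ) else 1

/-- The lattice point `aᵢ = e₁ + ⋯ + e_{n−1} + i·eₙ`. -/
def exA (n : ℕ) (i : ℕ) : Fin n → ℤ := fun j => if (j : ℕ) = n - 1 then (i : ℤ) else 1

/-! Lattice points `p` of `Q` are those with `0 ≤ pₙ ≤ r pⱼ` for `j < n`. The additive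
functional `d p = ∑ pⱼ - (n - 1) pₙ` takes the value `k` at `u`, and `d p ≥ 1` for every
nonzero lattice point `p` of `Q` with `pₙ ≤ 1`: then `pⱼ ≥ pₙ` for all `j`, and
`d p = ∑_{j<n} (pⱼ - pₙ) + pₙ`. Since `uₙ = 1` and last coordinates are nonnegative on `Q`,
every summand in a factorization of `χ^u` has `pₙ ≤ 1`, so `χ^u ∉ m^(k+1)`. On the other hand
`u = a₁ + (k - 1) e₁` exhibits `χ^u ∈ m^k`. -/

open Fin

theorem latticeInCone_zero {n m : ℕ} (w : Fin m → Fin n → ℤ) : latticeInCone w 0 :=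
  ⟨0, fun _ => le_rfl, by ext; simp [castZ]⟩

theorem inPowM_of_eq_sum {n m k : ℕ} {w : Fin m → Fin n → ℤ} {u : Fin n → ℤ}
    (v : Fin k → Fin n → ℤ) (hv : ∀ i, latticeInCone w (v i) ∧ v i ≠ 0) (hu : u = ∑ i, v i) :
    inPowM w u k :=
  ⟨v, hv, by simpa [hu] using latticeInCone_zero w⟩

theorem inPowM_add_nsmul {n m : ℕ} {w : Fin m → Fin n → ℤ} {a b : Fin n → ℤ}
    (ha : latticeInCone w a) (ha0 : a ≠ 0) (hb : latticeInCone w b) (hb0 : b ≠ 0) (j : ℕ) :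
    inPowM w (a + j • b) (j + 1) :=
  inPowM_of_eq_sum (cons a fun _ => b) (cases ⟨ha, ha0⟩ fun _ => ⟨hb, hb0⟩)
    (by simp [sum_univ_succ])

theorem inPowM.natCast_le {n m k : ℕ} {w : Fin m → Fin n → ℤ} {u : Fin n → ℤ}
    (f ℓ : (Fin n → ℤ) →+ ℤ) (hℓ : ∀ p, latticeInCone w p → 0 ≤ ℓ p)
    (hf : ∀ p, latticeInCone w p → ℓ p ≤ ℓ u → p ≠ 0 → 1 ≤ f p) (h : inPowM w u k) :
    (k : ℤ) ≤ f u := by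
  obtain ⟨v, hv, hrem⟩ := h
  set q := u - ∑ i, v i
  have hu : u = ∑ i, v i + q := by simp [q]
  have hℓu : ℓ u = ∑ i, ℓ (v i) + ℓ q := by rw [hu, map_add, map_sum]
  have hℓsum : 0 ≤ ∑ i, ℓ (v i) := sum_nonneg fun i _ => hℓ _ (hv i).1
  have hℓv : ∀ i, ℓ (v i) ≤ ℓ u := fun i => by
    linarith [single_le_sum (fun j _ => hℓ _ (hv j).1) (mem_univ i), hℓ q hrem]
  have hfq : 0 ≤ f q := by
    rcases eq_or_ne q 0 with hq | hq
    · simp [hq]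
    · exact zero_le_one.trans (hf q hrem (by linarith) hq)
  calc (k : ℤ) = ∑ _i : Fin k, 1 := by simp
    _ ≤ ∑ i, f (v i) := sum_le_sum fun i _ => hf _ (hv i).1 (hℓv i) (hv i).2
    _ ≤ f u := by rw [hu, map_add, map_sum]; linarith

section exCone

variable {m r : ℕ}

theorem exGens_last : exGens (m + 1) r (last m) = fun j => if j = last m then (r : ℤ) else 1 := by
  ext j
  simp [exGens, Fin.ext_iff]

theorem exGens_castSucc (i : Fin m) : exGens (m + 1) r i.castSucc = Pi.single i.castSucc 1 := by
  simp [exGens]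

theorem sum_smul_castZ_exGens_last (c : Fin (m + 1) → ℝ) :
    (∑ i, c i • castZ (exGens (m + 1) r i)) (last m) = c (last m) * r := by
  simp [sum_univ_castSucc, exGens_castSucc, exGens_last, castZ]

theorem sum_smul_castZ_exGens_castSucc (c : Fin (m + 1) → ℝ) (j : Fin m) :
    (∑ i, c i • castZ (exGens (m + 1) r i)) j.castSucc = c j.castSucc + c (last m) := by
  simp [sum_univ_castSucc, exGens_castSucc, exGens_last, castZ, Pi.single_apply]

theorem inCone_exGens_iff (hr : 0 < r) (x : Fin (m + 1) → ℝ) :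
    inCone (fun i => castZ (exGens (m + 1) r i)) x ↔
      0 ≤ x (last m) ∧ ∀ j : Fin m, x (last m) ≤ r * x j.castSucc := by
  have hr' : (0 : ℝ) < r := by exact_mod_cast hr
  constructor
  · rintro ⟨c, hc, rfl⟩
    rw [sum_smul_castZ_exGens_last]
    refine ⟨mul_nonneg (hc _) hr'.le, fun j => ?_⟩
    rw [sum_smul_castZ_exGens_castSucc]
    nlinarith [hc j.castSucc]
  · rintro ⟨hlast, hj⟩
    refine ⟨lastCases (x (last m) / r) fun j => x j.castSucc - x (last m) / r,
      fun i => ?_, ?_⟩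
    · cases i using lastCases with
      | last => simp only [lastCases_last]; positivity
      | cast j => simpa [sub_nonneg, div_le_iff₀ hr', mul_comm] using hj j
    · ext j
      cases j using lastCases with
      | last => rw [sum_smul_castZ_exGens_last, lastCases_last, div_mul_cancel₀ _ hr'.ne']
      | cast j => rw [sum_smul_castZ_exGens_castSucc]; simp

theorem latticeInCone_exGens_iff (hr : 0 < r) (p : Fin (m + 1) → ℤ) :
    latticeInCone (exGens (m + 1) r) p ↔
      0 ≤ p (last m) ∧ ∀ j : Fin m, p (last m) ≤ r * p j.castSucc := by
  rw [latticeInCone, inCone_exGens_iff hr]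
  simp only [castZ]
  norm_cast

end exCone

def exDegree (m : ℕ) : (Fin (m + 1) → ℤ) →+ ℤ where
  toFun p := ∑ j, p j - m * p (last m)
  map_zero' := by simp
  map_add' p q := by simp only [Pi.add_apply, sum_add_distrib]; ring

section exDegree

variable {m r : ℕ}

theorem exDegree_eq_sum_add (p : Fin (m + 1) → ℤ) :
    exDegree m p = ∑ j : Fin m, (p j.castSucc - p (last m)) + p (last m) := by
  simp only [exDegree, AddMonoidHom.coe_mk, ZeroHom.coe_mk, sum_univ_castSucc, sum_sub_distrib,
    Fin.sum_const, nsmul_eq_mul]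
  ring

theorem last_le_of_latticeInCone_exGens (hr : 0 < r) {p : Fin (m + 1) → ℤ}
    (hp : latticeInCone (exGens (m + 1) r) p) (h1 : p (last m) ≤ 1) (j : Fin m) :
    p (last m) ≤ p j.castSucc := by
  obtain ⟨h0, hj⟩ := (latticeInCone_exGens_iff hr p).1 hp
  have hr' : (1 : ℤ) ≤ r := by exact_mod_cast hr
  nlinarith [hj j]

theorem one_le_exDegree (hr : 0 < r) {p : Fin (m + 1) → ℤ}
    (hp : latticeInCone (exGens (m + 1) r) p) (h1 : p (last m) ≤ 1) (hp0 : p ≠ 0) :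
    1 ≤ exDegree m p := by
  have hle := last_le_of_latticeInCone_exGens hr hp h1
  have hsum : 0 ≤ ∑ j : Fin m, (p j.castSucc - p (last m)) :=
    sum_nonneg fun j _ => sub_nonneg.2 (hle j)
  rw [exDegree_eq_sum_add]
  obtain hlast | hlast : p (last m) = 0 ∨ 1 ≤ p (last m) := by
    have := ((latticeInCone_exGens_iff hr p).1 hp).1; omega
  · obtain ⟨i, hi⟩ := Function.ne_iff.1 hp0
    cases i using lastCases with
    | last => exact absurd hlast hi
    | cast j =>
      have hj := single_le_sum (fun j _ => sub_nonneg.2 (hle j)) (mem_univ j)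
      have := hle j
      simp only [Pi.zero_apply] at hi
      omega
  · linarith

end exDegree

/-- In the cone `Q = Cone(e₁,...,e_{n−1}, a)` with
`a = e₁ + ⋯ + e_{n−1} + r·eₙ`, `r > n − 2`, the monomial `χ^u` with
`u = (k−1)e₁ + a₁ = k·e₁ + e₂ + ⋯ + eₙ` lies in `m^k` but not in `m^{k+1}`. -/
theorem example_monomial_in_mk_not_mk1 (n r k : ℕ) (hn : 2 ≤ n) (hr : n - 2 < r)
    (hk : 1 ≤ k) :
    inPowM (exGens n r) (fun j => if (j : ℕ) = 0 then (k : ℤ) else 1) k ∧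
    ¬ inPowM (exGens n r) (fun j => if (j : ℕ) = 0 then (k : ℤ) else 1) (k + 1) := by
  obtain ⟨m, rfl⟩ : ∃ m, n = m + 1 := ⟨n - 1, by omega⟩
  obtain ⟨i, rfl⟩ : ∃ i, k = i + 1 := ⟨k - 1, by omega⟩
  have hr0 : 0 < r := by omega
  have h0 : (0 : Fin (m + 1)) ≠ last m := by simp [Fin.ext_iff]; omega
  have hu : (fun j : Fin (m + 1) => if (j : ℕ) = 0 then ((i + 1 : ℕ) : ℤ) else 1) =
      1 + i • Pi.single 0 1 := by
    ext j
    cases j using Fin.cases <;> simp [Fin.succ_ne_zero, add_comm]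
  have hone : latticeInCone (exGens (m + 1) r) 1 := by
    rw [latticeInCone_exGens_iff hr0]
    simp only [Pi.one_apply, mul_one]
    exact ⟨zero_le_one, fun _ => by exact_mod_cast hr0⟩
  have he0 : latticeInCone (exGens (m + 1) r) (Pi.single 0 1) := by
    simp only [latticeInCone_exGens_iff hr0, Pi.single_apply, h0.symm, if_false, le_refl, true_and]
    intro j
    split_ifs <;> positivity
  rw [hu]
  refine ⟨inPowM_add_nsmul hone one_ne_zero he0 (by simp) i, fun h => ?_⟩
  have hdeg := h.natCast_le (exDegree m) (Pi.evalAddMonoidHom _ (last m))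
    (fun p hp => ((latticeInCone_exGens_iff hr0 p).1 hp).1)
    (fun p hp hlast hp0 => one_le_exDegree hr0 hp (by simpa [h0.symm] using hlast) hp0)
  have hdeg_one : exDegree m 1 = 1 := by simp [exDegree]
  have hdeg_e0 : exDegree m (Pi.single 0 1) = 1 := by simp [exDegree, h0.symm]
  rw [map_add, map_nsmul, hdeg_one, hdeg_e0, nsmul_one] at hdeg
  omega
end

section
/- Let P be the polytope in ℝ^n (n ≥ 2) with vertices 0, e_1, ..., e_{n−1}, a where a = e_1 + ... + e_{n−1} + r·e_n with r > n − 2. For k ≥ 1, let u = k·e_1 + e_2 + ... + e_n. Then u does not belong to the dilated polytope (k + n − 3)·P. -/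
open Finset

set_option maxHeartbeats 1000000 in
/-- Let `P ⊆ ℝⁿ` (`n ≥ 2`) be the polytope with vertices
`0, e₁, ..., e_{n−1}, a`, where `a = e₁ + ⋯ + e_{n−1} + r·eₙ` with `r > n − 2`.
For `k ≥ 1`, the point `u = k·e₁ + e₂ + ⋯ + eₙ` does not belong to the dilation
`(k + n − 3)·P`. -/
theorem example_point_not_in_dilated_polytope (n r k : ℕ) (hn : 2 ≤ n)
    (hr : n - 2 < r) (hk : 1 ≤ k) :
    (fun j : Fin n => if (j : ℕ) = 0 then (k : ℝ) else 1) ∉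
      (fun x : Fin n → ℝ => ((k : ℝ) + (n : ℝ) - 3) • x) ''
        convexHull ℝ (insert (0 : Fin n → ℝ)
          (insert (castZ (exA n r))
            (Set.range fun i : Fin (n - 1) => castZ (Pi.single (Fin.castLE (by omega) i) 1)))) := by
  rintro ⟨x, hx, hux⟩
  have hux' : ((k : ℝ) + (n : ℝ) - 3) • x
      = (fun j : Fin n => if (j : ℕ) = 0 then (k : ℝ) else 1) := hux
  clear hux
  have hr1 : 1 ≤ r := by omega
  have hrR : (0:ℝ) < (r:ℝ) := by exact_mod_cast hr1
  set m : Fin n := ⟨n - 1, by omega⟩ with hm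
  set z : Fin n := ⟨0, by omega⟩ with hz
  set c : Fin n → ℝ := fun j => if (j : ℕ) = n - 1 then (2 - (n:ℝ)) / r else 1 with hc
  set L : (Fin n → ℝ) → ℝ := fun y => ∑ j, c j * y j with hL
  have hlin : IsLinearMap ℝ L := by
    constructor
    · intro a b
      simp [hL, mul_add, Finset.sum_add_distrib]
    · intro s a
      simp only [hL, Pi.smul_apply, smul_eq_mul, Finset.mul_sum]
      exact Finset.sum_congr rfl fun i _ => by ring
  have hjm : ∀ j : Fin n, ((j : ℕ) = n - 1) ↔ j = m := fun j => by rw [Fin.ext_iff]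
  have hjz : ∀ j : Fin n, ((j : ℕ) = 0) ↔ j = z := fun j => by rw [Fin.ext_iff]
  -- each vertex satisfies L ≤ 1
  have hsub : (insert (0 : Fin n → ℝ)
      (insert (castZ (exA n r))
        (Set.range fun i : Fin (n - 1) => castZ (Pi.single (Fin.castLE (by omega) i) 1))))
      ⊆ {y | L y ≤ 1} := by
    rintro y (rfl | rfl | ⟨i, rfl⟩)
    · simp [hL]
    · have : L (castZ (exA n r)) = 1 := by
        have key : ∀ j : Fin n, c j * castZ (exA n r) j
            = 1 + (if j = m then (1 - (n:ℝ)) else 0) := by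
          intro j
          simp only [hc, castZ, exA, ← hjm j]
          by_cases hj : (j : ℕ) = n - 1 <;> simp [hj]
          field_simp
          ring
        rw [hL]
        simp only [key]
        rw [Finset.sum_add_distrib, Finset.sum_ite_eq' Finset.univ m (fun _ => (1 - (n:ℝ)))]
        simp
      simp [this]
    · have hne : ((Fin.castLE (by omega : n - 1 ≤ n) i : Fin n) : ℕ) ≠ n - 1 := by
        have := i.isLt
        simp only [Fin.coe_castLE]
        omega
      have : L (castZ (Pi.single (Fin.castLE (by omega) i) 1)) = 1 := by
        rw [hL]
        have key : ∀ j : Fin n, c j * castZ (Pi.single (Fin.castLE (by omega : n - 1 ≤ n) i) 1) j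
            = if j = (Fin.castLE (by omega : n - 1 ≤ n) i) then c j else 0 := by
          intro j
          simp only [castZ, Pi.single_apply]
          by_cases hj : j = Fin.castLE (by omega : n - 1 ≤ n) i <;> simp [hj]
        simp only [key]
        rw [Finset.sum_ite_eq' Finset.univ _ c]
        simp only [Finset.mem_univ, if_true, hc]
        rw [if_neg hne]
      simp [this]
  have hx1 : L x ≤ 1 := convexHull_min hsub (convex_halfSpace_le hlin 1) hx
  set t : ℝ := (k:ℝ) + (n:ℝ) - 3 with htdef
  have ht0 : 0 ≤ t := by
    have hk1 : (1:ℝ) ≤ k := by exact_mod_cast hk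
    have hn2 : (2:ℝ) ≤ n := by exact_mod_cast hn
    simp only [htdef]; linarith
  have hLu : L (fun j : Fin n => if (j : ℕ) = 0 then (k : ℝ) else 1)
      = (k:ℝ) + (n:ℝ) - 2 + (2 - (n:ℝ)) / r := by
    have key : ∀ j : Fin n, c j * (if (j : ℕ) = 0 then (k : ℝ) else 1)
        = 1 + (if j = m then ((2 - (n:ℝ)) / r - 1) else 0)
          + (if j = z then ((k:ℝ) - 1) else 0) := by
      intro j
      have h01 : ¬ (n - 1 = 0) := by omega
      have h10 : ¬ ((0:ℕ) = n - 1) := by omega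
      simp only [hc, ← hjm j, ← hjz j]
      by_cases h1 : (j : ℕ) = n - 1 <;> by_cases h2 : (j : ℕ) = 0
      · omega
      · simp [h1, h2, h01]
      · simp [h1, h2, h10]
      · simp [h1, h2]
    rw [hL]
    simp only [key]
    rw [Finset.sum_add_distrib, Finset.sum_add_distrib,
      Finset.sum_ite_eq' Finset.univ m (fun _ => (2 - (n:ℝ)) / r - 1),
      Finset.sum_ite_eq' Finset.univ z (fun _ => (k:ℝ) - 1)]
    simp only [Finset.mem_univ, if_true, Finset.sum_const, Finset.card_univ,
      Fintype.card_fin, nsmul_eq_mul, mul_one]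
    ring
  have hLle : L (fun j : Fin n => if (j : ℕ) = 0 then (k : ℝ) else 1) ≤ t := by
    rw [← hux', hlin.map_smul]
    calc t • L x = t * L x := rfl
      _ ≤ t * 1 := mul_le_mul_of_nonneg_left hx1 ht0
      _ = t := mul_one t
  have hgt : t < L (fun j : Fin n => if (j : ℕ) = 0 then (k : ℝ) else 1) := by
    rw [hLu, htdef]
    have hnr : (n:ℝ) - 2 < (r:ℝ) := by
      have h2 : (2:ℝ) ≤ n := by exact_mod_cast hn
      have : ((n - 2 : ℕ) : ℝ) < (r:ℝ) := by exact_mod_cast hr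
      rw [Nat.cast_sub hn] at this
      push_cast at this
      linarith
    have : (2 - (n:ℝ)) / r > -1 := by
      rw [gt_iff_lt, neg_lt, ← neg_div, neg_sub, div_lt_one hrR]
      linarith
    linarith
  linarith
end
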